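/- For fixed integers d ≥ 1 and d_0 with 1 ≤ d_0 ≤ d, as n → ∞ the ratio (2n·sum_{i=0}^{d_0-1} binom(n-1, i) + 2d·sum_{i=0}^{d_0-1} binom(n, i)) / (sum_{i=0}^{d_0} binom(n, i)) is at most 2d_0 + 2d·d_0/(n - d_0 + 1); in particular for all sufficiently large n it is at most 2d_0 + 1. -/

import Mathlib

/-! Both numerator sums are dominated termwise by `(i + 1) * C(n, i + 1)`: the first through
`n * C(n - 1, i) = (i + 1) * C(n, i + 1)`, the second, after multiplying by `n - d₀ + 1 ≤ n - i`,
through `(n - i) * C(n, i) = (i + 1) * C(n, i + 1)`. Since `i + 1 ≤ d₀`, summing over `i < d₀`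
gives at most `d₀` times the denominator `∑_{i ≤ d₀} C(n, i)`. -/

/-- Average facet count per linear region for a one-hidden-layer ReLU network with `d`
inputs and `n` hidden neurons whose weight matrix has rank `d₀`. -/
noncomputable def avgFacesLowRank (d d₀ n : ℕ) : ℝ :=
  (2 * (n : ℝ) * ∑ i ∈ Finset.range d₀, ((n - 1).choose i : ℝ) +
      2 * (d : ℝ) * ∑ i ∈ Finset.range d₀, (n.choose i : ℝ)) /
    (∑ i ∈ Finset.range (d₀ + 1), (n.choose i : ℝ))

open Finset Filter

namespace Nat

theorem mul_choose_sub_one (n i : ℕ) : n * (n - 1).choose i = (i + 1) * n.choose (i + 1) := by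
  cases n with
  | zero => simp
  | succ m => simpa [Nat.mul_comm (i + 1)] using add_one_mul_choose_eq m i

theorem sum_range_succ_mul_choose_succ_le (n k : ℕ) :
    ∑ i ∈ range k, (i + 1) * n.choose (i + 1) ≤ k * ∑ i ∈ range (k + 1), n.choose i :=
  calc ∑ i ∈ range k, (i + 1) * n.choose (i + 1)
      ≤ ∑ i ∈ range k, k * n.choose (i + 1) :=
        sum_le_sum fun i hi => Nat.mul_le_mul_right _ (mem_range.mp hi)
    _ = k * ∑ i ∈ range k, n.choose (i + 1) := (mul_sum ..).symm
    _ ≤ k * ∑ i ∈ range (k + 1), n.choose i := by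
        rw [sum_range_succ' _ k]
        exact Nat.mul_le_mul_left _ (Nat.le_add_right _ _)

theorem mul_sum_range_choose_sub_one_le (n k : ℕ) :
    n * ∑ i ∈ range k, (n - 1).choose i ≤ k * ∑ i ∈ range (k + 1), n.choose i := by
  simpa only [mul_sum, mul_choose_sub_one] using sum_range_succ_mul_choose_succ_le n k

theorem sub_add_one_mul_choose_le {n k i : ℕ} (hkn : k ≤ n) (hik : i < k) :
    (n - k + 1) * n.choose i ≤ (i + 1) * n.choose (i + 1) :=
  calc (n - k + 1) * n.choose i ≤ (n - i) * n.choose i := Nat.mul_le_mul_right _ (by omega)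
    _ = (i + 1) * n.choose (i + 1) := by rw [Nat.mul_comm, ← choose_succ_right_eq, Nat.mul_comm]

theorem sub_add_one_mul_sum_range_choose_le {n k : ℕ} (hkn : k ≤ n) :
    (n - k + 1) * ∑ i ∈ range k, n.choose i ≤ k * ∑ i ∈ range (k + 1), n.choose i := by
  rw [mul_sum]
  exact (sum_le_sum fun i hi => sub_add_one_mul_choose_le hkn (mem_range.mp hi)).trans
    (sum_range_succ_mul_choose_succ_le n k)

end Nat

theorem avgFacesLowRank_le (d : ℕ) {d₀ n : ℕ} (hn : d₀ ≤ n) :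
    avgFacesLowRank d d₀ n ≤
      2 * (d₀ : ℝ) + 2 * (d : ℝ) * (d₀ : ℝ) / ((n : ℝ) - (d₀ : ℝ) + 1) := by
  set D : ℝ := ∑ i ∈ range (d₀ + 1), (n.choose i : ℝ)
  set A : ℝ := ∑ i ∈ range d₀, ((n - 1).choose i : ℝ)
  set S : ℝ := ∑ i ∈ range d₀, (n.choose i : ℝ)
  have hD : 0 < D := by
    have : (1 : ℝ) ≤ D := by
      simpa using single_le_sum (f := fun i => (n.choose i : ℝ)) (fun _ _ => by positivity)
        (mem_range.mpr d₀.succ_pos)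
    linarith
  have hm : (0 : ℝ) < n - d₀ + 1 := by
    have : (d₀ : ℝ) ≤ n := by exact_mod_cast hn
    linarith
  have hA : n * A ≤ d₀ * D := by
    simp only [A, D]
    exact_mod_cast Nat.mul_sum_range_choose_sub_one_le n d₀
  have hS : (n - d₀ + 1) * S ≤ d₀ * D := by
    have := Nat.cast_le (α := ℝ) |>.mpr (Nat.sub_add_one_mul_sum_range_choose_le hn)
    push_cast [Nat.cast_sub hn] at this
    exact this
  calc avgFacesLowRank d d₀ n = 2 * (n * A / D) + 2 * d * (S / D) := by
        rw [avgFacesLowRank]; ring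
    _ ≤ 2 * d₀ + 2 * d * (d₀ / (n - d₀ + 1)) := by
        have hAD : n * A / D ≤ d₀ := div_le_of_le_mul₀ hD.le (Nat.cast_nonneg _) hA
        have hSD : S / D ≤ d₀ / (n - d₀ + 1) := by rw [div_le_div_iff₀ hD hm]; linarith
        gcongr
    _ = 2 * d₀ + 2 * d * d₀ / (n - d₀ + 1) := by ring

theorem stmt_17_general (d d₀ : ℕ) :
    (∀ᶠ n : ℕ in Filter.atTop,
      avgFacesLowRank d d₀ n ≤
        2 * (d₀ : ℝ) + 2 * (d : ℝ) * (d₀ : ℝ) / ((n : ℝ) - (d₀ : ℝ) + 1)) ∧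
    ∀ᶠ n : ℕ in Filter.atTop, avgFacesLowRank d d₀ n ≤ 2 * (d₀ : ℝ) + 1 := by
  refine ⟨(eventually_ge_atTop d₀).mono fun n hn => avgFacesLowRank_le d hn, ?_⟩
  filter_upwards [eventually_ge_atTop (2 * d * d₀ + d₀)] with n hn
  have hn_real : ((2 * d * d₀ + d₀ : ℕ) : ℝ) ≤ n := by exact_mod_cast hn
  push_cast at hn_real
  have hm : (0 : ℝ) < n - d₀ + 1 := by nlinarith
  have hsmall : 2 * (d : ℝ) * d₀ / (n - d₀ + 1) ≤ 1 := by
    rw [div_le_one hm]; linarith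
  linarith [avgFacesLowRank_le d (d₀ := d₀) (n := n) (by omega)]

/-- for fixed `d ≥ 1` and `1 ≤ d₀ ≤ d`, as `n → ∞` the ratio is at most
`2d₀ + 2d·d₀/(n - d₀ + 1)`; in particular it is at most `2d₀ + 1` for all
sufficiently large `n`. -/
theorem stmt_17 (d d₀ : ℕ) (hd₀ : 1 ≤ d₀) (hd : d₀ ≤ d) :
    (∀ᶠ n : ℕ in Filter.atTop,
      avgFacesLowRank d d₀ n ≤
        2 * (d₀ : ℝ) + 2 * (d : ℝ) * (d₀ : ℝ) / ((n : ℝ) - (d₀ : ℝ) + 1)) ∧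
    ∀ᶠ n : ℕ in Filter.atTop, avgFacesLowRank d d₀ n ≤ 2 * (d₀ : ℝ) + 1 :=
  stmt_17_general d d₀
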